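/- Generalized Fréchet/Kwerel lower bound: for an ℓ-way contingency table n and 1 ≤ d ≤ ℓ, each full cell entry n(x) is at least (1/C(ℓ−1,d−1))·Σ_{1≤j₁<⋯<j_d≤ℓ} n({j₁,…,j_d})(x restricted) − (C(ℓ,d)/C(ℓ−1,d−1) − 1)·n(∅), where n(∅) is the grand total. -/
import Mathlib


/-- The marginal of a contingency table `n` over the subset `a` of coordinates. -/
noncomputable def marg {ℓ : ℕ} {I : Fin ℓ → Type*}
    [∀ i, Fintype (I i)] [∀ i, DecidableEq (I i)]
    (n : (∀ i, I i) → ℝ) (a : Finset (Fin ℓ)) (x : ∀ i, I i) : ℝ :=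
  ∑ y ∈ Finset.univ.filter (fun y : ∀ i, I i => ∀ i ∈ a, y i = x i), n y

/-- Generalized Fréchet/Kwerel lower bound: each full cell entry `n(x)` is at least
`(1/C(ℓ−1,d−1))·Σ_{|s|=d} n(s)(x) − (C(ℓ,d)/C(ℓ−1,d−1) − 1)·n(∅)`. -/
theorem frechet_kwerel_lower {ℓ : ℕ} {I : Fin ℓ → Type*}
    [∀ i, Fintype (I i)] [∀ i, DecidableEq (I i)]
    (n : (∀ i, I i) → ℝ) (hn : ∀ y, 0 ≤ n y)
    (d : ℕ) (hd : 1 ≤ d) (hdl : d ≤ ℓ) (x : ∀ i, I i) :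
    (1 / ((ℓ - 1).choose (d - 1) : ℝ)) *
        (∑ s ∈ Finset.univ.powersetCard d, marg n s x)
      - ((ℓ.choose d : ℝ) / ((ℓ - 1).choose (d - 1) : ℝ) - 1) * (∑ y, n y)
      ≤ n x := by
  classical
  have hℓ : 1 ≤ ℓ := le_trans hd hdl
  set c : ℝ := ((ℓ - 1).choose (d - 1) : ℝ) with hc
  have hcpos : 0 < c := by
    have : 0 < (ℓ - 1).choose (d - 1) := Nat.choose_pos (by omega)
    rw [hc]; exact_mod_cast this
  set A : (∀ i, I i) → Finset (Fin ℓ) :=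
    fun y => Finset.univ.filter (fun i => y i = x i) with hA
  -- Pascal identity: C(ℓ,d) = C(ℓ-1,d-1) + C(ℓ-1,d)
  have pascal : ℓ.choose d = (ℓ - 1).choose (d - 1) + (ℓ - 1).choose d := by
    have h1 : ℓ = (ℓ - 1) + 1 := by omega
    have h2 : d = (d - 1) + 1 := by omega
    rw [h1, h2, Nat.choose_succ_succ]
    simp [Nat.succ_eq_add_one]
  -- swap sums
  have key : ∑ s ∈ Finset.univ.powersetCard d, marg n s x
      = ∑ y, n y * ((A y).card.choose d : ℝ) := by
    unfold marg
    simp_rw [Finset.sum_filter]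
    rw [Finset.sum_comm]
    refine Finset.sum_congr rfl fun y _ => ?_
    have hiff : ∀ s : Finset (Fin ℓ), (∀ i ∈ s, y i = x i) ↔ s ⊆ A y := by
      intro s
      simp [hA, Finset.subset_iff]
    calc ∑ s ∈ Finset.univ.powersetCard d, (if ∀ i ∈ s, y i = x i then n y else 0)
        = ∑ s ∈ (Finset.univ.powersetCard d).filter (fun s => s ⊆ A y), n y := by
          rw [Finset.sum_filter]
          exact Finset.sum_congr rfl fun s _ => by rw [if_congr (hiff s) rfl rfl]
      _ = ∑ s ∈ (A y).powersetCard d, n y := by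
          congr 1
          ext s
          simp [Finset.mem_powersetCard, and_comm]
      _ = n y * ((A y).card.choose d : ℝ) := by
          rw [Finset.sum_const, Finset.card_powersetCard]
          ring
  rw [key]
  set S : ℝ := ∑ y, n y * ((A y).card.choose d : ℝ) with hS
  set T : ℝ := ∑ y, n y with hT
  set L : ℝ := (ℓ.choose d : ℝ) with hL
  have h2 : (1 / c) * S - (L / c - 1) * T = (S - (L - c) * T) / c := by
    field_simp
  rw [h2, div_le_iff₀ hcpos]
  have hmain : S - (L - c) * T ≤ c * n x := by
    have hrw : S - (L - c) * T
        = ∑ y, (n y * ((A y).card.choose d : ℝ) - (L - c) * n y) := by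
      rw [hS, hT, Finset.mul_sum, ← Finset.sum_sub_distrib]
    have hrx : c * n x = ∑ y, (if y = x then c * n y else 0) := by
      simp
    rw [hrw, hrx]
    refine Finset.sum_le_sum fun y _ => ?_
    by_cases hy : y = x
    · subst hy
      have hAx : A y = Finset.univ := by
        ext i; simp [hA]
      rw [hAx, Finset.card_univ, Fintype.card_fin]
      simp [hL]
      ring_nf
      simp
    · -- y ≠ x : card (A y) ≤ ℓ - 1
      have hne : ∃ i, y i ≠ x i := Function.ne_iff.mp hy
      obtain ⟨i0, hi0⟩ := hne
      have hcard : (A y).card ≤ ℓ - 1 := by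
        have hss : A y ⊂ Finset.univ := by
          refine Finset.ssubset_univ_iff.mpr ?_
          intro h
          apply hi0
          have : i0 ∈ A y := h ▸ Finset.mem_univ i0
          simpa [hA] using this
        have := Finset.card_lt_card hss
        simp [Finset.card_univ] at this
        omega
      have hchoose : (A y).card.choose d + (ℓ - 1).choose (d - 1) ≤ ℓ.choose d := by
        have := Nat.choose_le_choose d hcard
        omega
      have hchooseR : ((A y).card.choose d : ℝ) ≤ L - c := by
        rw [hL, hc]
        have : ((A y).card.choose d : ℝ) + ((ℓ - 1).choose (d - 1) : ℝ)
            ≤ (ℓ.choose d : ℝ) := by exact_mod_cast hchoose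
        linarith
      simp only [if_neg hy]
      nlinarith [hn y]
  linarith [hmain]
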